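/- arXiv:math/9905076 — 4 statements merged into one kernel-verified Lean document; each statement's English description precedes it below -/
import Mathlib

section
/- Let e, d, m0 be integers with e ≥ 1, d ≥ 4e, and m0 ≥ 0. If e(d − m0 − 8) + m0 + 4 = 0 and (d−4e)(d−4e+3)/2 − (m0−4e+4)(m0−4e+5)/2 ≥ 0, then d = 4e and m0 = 4e − 4. -/
/-! In the shifted variables `x = d - 4e` and `y = m0 - 4e + 4` the two hypotheses read
`e x = (e - 1) y` and `y (y + 1) ≤ x (x + 3)`. Since `0 ≤ y` (from `m0 ≥ 0` when `e = 1`, from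
the linear relation otherwise), the linear relation gives `x ≤ y`; the quadratic bound then
forces `y = x`, and the linear relation becomes `x = 0`. -/

theorem Int.le_of_ediv_two_le_ediv_two {a b : ℤ} (hb : Even b) (h : b / 2 ≤ a / 2) : b ≤ a := by
  obtain ⟨k, rfl⟩ := hb
  omega

theorem Int.le_of_mul_eq_sub_one_mul {e x y : ℤ} (he : 1 ≤ e) (hy : 0 ≤ y)
    (h : e * x = (e - 1) * y) : x ≤ y :=
  le_of_mul_le_mul_left (by linarith) (by linarith : (0 : ℤ) < e)

theorem Int.eq_of_le_of_mul_add_one_le {x y : ℤ} (hx : 0 ≤ x) (hxy : x ≤ y)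
    (h : y * (y + 1) ≤ x * (x + 3)) : y = x := by
  -- If `x + 1 ≤ y` then `y (y + 1) ≥ (x + 1) (x + 2) > x (x + 3)`.
  nlinarith

/-- Case analysis: `A = L(e, e-1, 2e, 1)` splits off 4 times from `L(d, m0, 2e, 4)`.
If `M·A = 0` and `v(M) ≥ 0` then `d = 4e` and `m0 = 4e - 4`. -/
theorem split_four_times (e d m0 : ℤ) (he : 1 ≤ e) (hd : 4 * e ≤ d) (hm : 0 ≤ m0)
    (hMA : e * (d - m0 - 8) + m0 + 4 = 0)
    (hvM : 0 ≤ (d - 4 * e) * (d - 4 * e + 3) / 2 - (m0 - 4 * e + 4) * (m0 - 4 * e + 5) / 2) :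
    d = 4 * e ∧ m0 = 4 * e - 4 := by
  obtain ⟨x, hx⟩ : ∃ x, d = x + 4 * e := ⟨d - 4 * e, by ring⟩
  obtain ⟨y, hy⟩ : ∃ y, m0 = y + 4 * e - 4 := ⟨m0 - 4 * e + 4, by ring⟩
  subst hx hy
  have hlin : e * x = (e - 1) * y := by linear_combination hMA
  have hquad : y * (y + 1) ≤ x * (x + 3) := by
    refine Int.le_of_ediv_two_le_ediv_two (Int.even_mul_succ_self y) ?_
    convert sub_nonneg.mp hvM using 3 <;> ring
  have hy : 0 ≤ y := by
    rcases he.eq_or_lt with rfl | he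
    · linarith
    · nlinarith
  obtain rfl : y = x :=
    Int.eq_of_le_of_mul_add_one_le (by linarith) (Int.le_of_mul_eq_sub_one_mul he hy hlin) hquad
  have hy0 : y = 0 := by linarith
  constructor <;> linarith
end

section
/- Let e, d, m0 be integers with e ≥ 1, d ≥ 3e, and m0 ≥ 3e − 3. If e(d − m0 − 8) + m0 + 3 = 0 and (d−3e)(d−3e+3)/2 − (m0−3e+3)(m0−3e+4)/2 − 2e ≥ 0, then either (d = 3e+2, m0 = 3e−3, and e ≤ 2), or (d = 4e+1 and m0 = 4e−3), or (d = 5e and m0 = 5e−3). -/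
/-!
Write `a = d - 3e`, `b = m0 - 3e + 3` for the degree and the multiplicity at the first point of
the residual system `M = L(a, b, 2e, 1)`. The condition `M·A = 0` says `b = e k` with
`k = b + 2 - a = m0 - d + 5`, so `k ≥ 0`. Substituting `a = b + 2 - k`, twice the virtual
dimension of `M` is `2(3 - k) e k + (k - 2)(k - 5) - 4e`, which is negative once `k ≥ 3`.
The three remaining slopes `k = 0, 1, 2` are the three families.
-/

/-- The virtual dimension of `L(d, m0, n, m)`. -/
def virtualDim (d m0 n m : ℤ) : ℤ :=
  d * (d + 3) / 2 - m0 * (m0 + 1) / 2 - n * (m * (m + 1) / 2)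

lemma even_mul_add_three_self (a : ℤ) : Even (a * (a + 3)) := by
  have h : a * (a + 3) = a * (a + 1) + 2 * a := by ring
  rw [h]
  exact (Int.even_mul_succ_self a).add (even_two_mul a)

lemma two_mul_virtualDim (d m0 n m : ℤ) :
    2 * virtualDim d m0 n m = d * (d + 3) - m0 * (m0 + 1) - n * (m * (m + 1)) := by
  have hd := Int.two_mul_ediv_two_of_even (even_mul_add_three_self d)
  have hm0 := Int.two_mul_ediv_two_of_even (Int.even_mul_succ_self m0)
  have hm := Int.two_mul_ediv_two_of_even (Int.even_mul_succ_self m)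
  unfold virtualDim
  linear_combination hd - hm0 - n * hm

lemma slope_le_two {e a b : ℤ} (he : 1 ≤ e) (hb : 0 ≤ b) (hslope : b = e * (b + 2 - a))
    (hv : 0 ≤ virtualDim a b (2 * e) 1) : b + 2 - a ≤ 2 := by
  have hv2 := two_mul_virtualDim a b (2 * e) 1
  by_contra! hk
  obtain ⟨k, rfl⟩ : ∃ k, a = b + 2 - k := ⟨b + 2 - a, by ring⟩
  nlinarith [mul_pos (by omega : (0 : ℤ) < k - 2)
    (show (0 : ℤ) < 2 * e * (k - 1) - (k - 5) by nlinarith)]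

theorem split_three_times_general (e d m0 : ℤ) (he : 1 ≤ e) (hm : 3 * e - 3 ≤ m0)
    (hMA : e * (d - m0 - 8) + m0 + 3 = 0)
    (hvM : 0 ≤ (d - 3 * e) * (d - 3 * e + 3) / 2 - (m0 - 3 * e + 3) * (m0 - 3 * e + 4) / 2
        - 2 * e) :
    (d = 3 * e + 2 ∧ m0 = 3 * e - 3 ∧ e ≤ 2) ∨
    (d = 4 * e + 1 ∧ m0 = 4 * e - 3) ∨
    (d = 5 * e ∧ m0 = 5 * e - 3) := by
  have hv : 0 ≤ virtualDim (d - 3 * e) (m0 - 3 * e + 3) (2 * e) 1 := by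
    simpa [virtualDim, add_assoc] using hvM
  have hslope : m0 - 3 * e + 3 = e * (m0 - d + 5) := by linear_combination hMA
  have hk_nonneg : 0 ≤ m0 - d + 5 := nonneg_of_mul_nonneg_right (a := e) (by omega) (by omega)
  have hk_le : m0 - d + 5 ≤ 2 := by
    have := slope_le_two he (by omega) (by linear_combination hslope) hv
    omega
  generalize hk : m0 - d + 5 = k at hslope hk_nonneg hk_le
  interval_cases k
  · have h2v := two_mul_virtualDim (d - 3 * e) (m0 - 3 * e + 3) (2 * e) 1
    left
    refine ⟨by omega, by omega, by nlinarith⟩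
  · right; left; constructor <;> omega
  · right; right; constructor <;> omega

/-- Case analysis: `A = L(e, e-1, 2e, 1)` splits off 3 times from `L(d, m0, 2e, 4)`.
If `M·A = 0` and `v(M) ≥ 0` then one of three families occurs. -/
theorem split_three_times (e d m0 : ℤ) (he : 1 ≤ e) (hd : 3 * e ≤ d) (hm : 3 * e - 3 ≤ m0)
    (hMA : e * (d - m0 - 8) + m0 + 3 = 0)
    (hvM : 0 ≤ (d - 3 * e) * (d - 3 * e + 3) / 2 - (m0 - 3 * e + 3) * (m0 - 3 * e + 4) / 2
        - 2 * e) :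
    (d = 3 * e + 2 ∧ m0 = 3 * e - 3 ∧ e ≤ 2) ∨
    (d = 4 * e + 1 ∧ m0 = 4 * e - 3) ∨
    (d = 5 * e ∧ m0 = 5 * e - 3) :=
  split_three_times_general e d m0 he hm hMA hvM
end

section
/- For any five nonzero vectors p1, …, p5 ∈ ℂ³, there exists a nonzero homogeneous polynomial F ∈ ℂ[x, y, z] of degree 8 such that every partial derivative of F of total order at most 3 (including F itself) vanishes at each pᵢ. Consequently the system L(8, 0, 5, 4), whose virtual dimension is 8·11/2 − 5·10 = −6, is nonempty for points in general position, hence special. -/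
open MvPolynomial

/-- The differential operator `∂x^a ∂y^b ∂z^c` on `ℂ[x,y,z]`. -/
noncomputable def derivOp (a b c : ℕ) :
    MvPolynomial (Fin 3) ℂ →ₗ[ℂ] MvPolynomial (Fin 3) ℂ :=
  ((pderiv (0 : Fin 3)).toLinearMap ^ a * (pderiv (1 : Fin 3)).toLinearMap ^ b *
    (pderiv (2 : Fin 3)).toLinearMap ^ c : Module.End ℂ (MvPolynomial (Fin 3) ℂ))

noncomputable def expo : Fin 6 → (Fin 3 →₀ ℕ)
  | 0 => Finsupp.single 0 2
  | 1 => Finsupp.single 1 2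
  | 2 => Finsupp.single 2 2
  | 3 => Finsupp.single 0 1 + Finsupp.single 1 1
  | 4 => Finsupp.single 0 1 + Finsupp.single 2 1
  | 5 => Finsupp.single 1 1 + Finsupp.single 2 1

lemma expo_inj : Function.Injective expo := by
  intro j k h
  have h0 := DFunLike.congr_fun h 0
  have h1 := DFunLike.congr_fun h 1
  have h2 := DFunLike.congr_fun h 2
  clear h
  fin_cases j <;> fin_cases k <;>
    first
    | rfl
    | (simp [expo, Finsupp.single_apply] at h0 h1 h2 ⊢; try omega)

lemma degree_fin3 (d : Fin 3 →₀ ℕ) : d.degree = d 0 + d 1 + d 2 := by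
  rw [Finsupp.degree_apply, Finset.sum_subset (Finset.subset_univ _)
    (fun x _ hx => Finsupp.notMem_support_iff.mp hx), Fin.sum_univ_three]

lemma expo_degree (j : Fin 6) : (expo j).degree = 2 := by
  fin_cases j <;> simp [expo, degree_fin3, Finsupp.single_apply]

lemma dvd_pderiv {Q f : MvPolynomial (Fin 3) ℂ} {m : ℕ} (d : Fin 3)
    (h : Q ^ (m + 1) ∣ f) : Q ^ m ∣ pderiv d f := by
  obtain ⟨g, rfl⟩ := h
  rw [Derivation.leibniz, Derivation.leibniz_pow]
  simp only [smul_eq_mul, nsmul_eq_mul]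
  exact dvd_add (dvd_mul_of_dvd_left (pow_dvd_pow Q (Nat.le_succ m)) _)
    (dvd_mul_of_dvd_right (dvd_mul_of_dvd_right (dvd_mul_right _ _) _) _)

lemma dvd_pderiv_pow (Q : MvPolynomial (Fin 3) ℂ) (d : Fin 3) :
    ∀ (k m : ℕ) (f : MvPolynomial (Fin 3) ℂ), Q ^ (m + k) ∣ f →
      Q ^ m ∣ ((pderiv d).toLinearMap ^ k) f
  | 0, m, f, h => by simpa using h
  | k + 1, m, f, h => by
    rw [pow_succ, Module.End.mul_apply]
    refine dvd_pderiv_pow Q d k m _ (dvd_pderiv d ?_)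
    simpa [Nat.add_assoc] using h

noncomputable def evalLM (x : Fin 3 → ℂ) : MvPolynomial (Fin 3) ℂ →ₗ[ℂ] ℂ where
  toFun := eval x
  map_add' a b := by simp
  map_smul' r a := by simp [smul_eval]

/-- The system `L(8, 0, 5, 4)` is nonempty: for any five (nonzero) points there is a
nonzero homogeneous octic with a point of multiplicity at least 4 at each of them. -/
theorem L_8_0_5_4_nonempty (p : Fin 5 → Fin 3 → ℂ) (hp : ∀ i, p i ≠ 0) :
    ∃ F : MvPolynomial (Fin 3) ℂ, F ≠ 0 ∧ F.IsHomogeneous 8 ∧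
      ∀ i, ∀ a b c : ℕ, a + b + c ≤ 3 → eval (p i) (derivOp a b c F) = 0 := by
  classical
  set mon : Fin 6 → MvPolynomial (Fin 3) ℂ := fun j => monomial (expo j) 1 with hmon
  let φ : (Fin 6 → ℂ) →ₗ[ℂ] (Fin 5 → ℂ) :=
    LinearMap.pi fun i => (evalLM (p i)).comp (Fintype.linearCombination ℂ mon)
  have hker : LinearMap.ker φ ≠ ⊥ := by
    apply LinearMap.ker_ne_bot_of_finrank_lt (K := ℂ)
    simp
  obtain ⟨c, hcker, hc⟩ := Submodule.ne_bot_iff _ |>.mp hker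
  set Q : MvPolynomial (Fin 3) ℂ := ∑ j, c j • mon j with hQ
  have hQc : ∀ j, coeff (expo j) Q = c j := by
    intro j
    rw [hQ]
    rw [coeff_sum]
    rw [Finset.sum_eq_single j]
    · simp [hmon, coeff_smul, coeff_monomial]
    · intro k _ hkj
      simp only [hmon, coeff_smul, coeff_monomial]
      rw [if_neg (fun h => hkj (expo_inj h))]
      simp
    · simp
  have hQ0 : Q ≠ 0 := by
    obtain ⟨j, hj⟩ := Function.ne_iff.mp hc
    intro h
    exact hj (by simpa [h] using (hQc j).symm)
  have hQhom : Q.IsHomogeneous 2 := by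
    apply IsHomogeneous.sum
    intro j _
    rw [hmon, smul_monomial]
    exact isHomogeneous_monomial _ (expo_degree j)
  have hQeval : ∀ i, eval (p i) Q = 0 := by
    intro i
    have := congr_fun (LinearMap.mem_ker.mp hcker) i
    simpa [φ, evalLM, Fintype.linearCombination_apply, hQ] using this
  refine ⟨Q ^ 4, pow_ne_zero _ hQ0, by simpa using hQhom.pow 4, ?_⟩
  intro i a b k habk
  obtain ⟨m, hm⟩ : ∃ m, m + a + b + k = 4 := ⟨4 - (a + b + k), by omega⟩
  have h2 : Q ^ (m + a + b) ∣ ((pderiv (2 : Fin 3)).toLinearMap ^ k) (Q ^ 4) :=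
    dvd_pderiv_pow Q 2 k (m + a + b) _ (by rw [hm])
  have h1 : Q ^ (m + a) ∣ ((pderiv (1 : Fin 3)).toLinearMap ^ b)
      (((pderiv (2 : Fin 3)).toLinearMap ^ k) (Q ^ 4)) :=
    dvd_pderiv_pow Q 1 b (m + a) _ h2
  have h0 : Q ^ m ∣ derivOp a b k (Q ^ 4) := by
    simp only [derivOp, Module.End.mul_apply]
    exact dvd_pderiv_pow Q 0 a m _ h1
  have hQdvd : Q ∣ derivOp a b k (Q ^ 4) :=
    (dvd_pow_self Q (by omega : m ≠ 0)).trans h0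
  obtain ⟨g, hg⟩ := hQdvd
  rw [hg, eval_mul, hQeval i, zero_mul]
end

section
/- For any two nonzero vectors p1, p2 ∈ ℂ³, the ℂ-vector space of homogeneous polynomials F ∈ ℂ[x, y, z] of degree 5 such that every partial derivative of F of total order at most 3 (including F itself) vanishes at both p1 and p2 has dimension at least 4. Consequently the system L(5, 0, 2, 4), whose virtual dimension is 5·8/2 − 2·10 = 0 (expected vector-space dimension 1), has dimension at least 3 at points in general position, hence is special. -/
open MvPolynomial

/-- The submodule of polynomials all of whose partial derivatives of total order `< m`
vanish at `p`, i.e. having multiplicity at least `m` at `p`. -/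
noncomputable def multPoint (m : ℕ) (p : Fin 3 → ℂ) :
    Submodule ℂ (MvPolynomial (Fin 3) ℂ) :=
  ⨅ (a : ℕ) (b : ℕ) (c : ℕ) (_ : a + b + c < m),
    LinearMap.ker ((aeval p).toLinearMap.comp (derivOp a b c))

lemma pderiv_comm' (i j : Fin 3) (f : MvPolynomial (Fin 3) ℂ) :
    pderiv i (pderiv j f) = pderiv j (pderiv i f) := by
  induction f using MvPolynomial.induction_on' with
  | monomial s a =>
    rcases eq_or_ne i j with rfl | hij
    · rfl
    · simp only [pderiv_monomial]
      rw [tsub_tsub, tsub_tsub, add_comm (Finsupp.single j 1)]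
      congr 1
      rw [Finsupp.tsub_apply, Finsupp.tsub_apply, Finsupp.single_apply, Finsupp.single_apply,
        if_neg hij, if_neg (Ne.symm hij)]
      push_cast [Nat.sub_zero]
      ring
  | add f g hf hg => simp [hf, hg]

lemma pderiv_commute (i j : Fin 3) :
    Commute ((pderiv i : Derivation ℂ (MvPolynomial (Fin 3) ℂ) _).toLinearMap)
      ((pderiv j : Derivation ℂ (MvPolynomial (Fin 3) ℂ) _).toLinearMap) := by
  apply LinearMap.ext
  intro f
  exact pderiv_comm' i j f


lemma comm_aux0 {M : Type*} [Monoid M] {x y z : M} (hxy : Commute x y) (hxz : Commute x z)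
    (a b c : ℕ) : x^(a+1)*y^b*z^c = x^a*y^b*z^c*x := by
  rw [pow_succ, mul_assoc (x^a), (hxy.pow_right b).eq, ← mul_assoc, mul_assoc (x^a*y^b),
    (hxz.pow_right c).eq, ← mul_assoc]

lemma comm_aux1 {M : Type*} [Monoid M] {x y z : M} (hyz : Commute y z)
    (a b c : ℕ) : x^a*y^(b+1)*z^c = x^a*y^b*z^c*y := by
  rw [pow_succ, ← mul_assoc, mul_assoc (x^a*y^b), (hyz.pow_right c).eq, ← mul_assoc]

lemma peel0 (a b c : ℕ) (f : MvPolynomial (Fin 3) ℂ) :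
    derivOp (a+1) b c f = derivOp a b c (pderiv 0 f) := by
  have h : derivOp (a+1) b c = (derivOp a b c).comp (pderiv (0:Fin 3)).toLinearMap := by
    show (_ : Module.End ℂ _) = _ * _
    unfold derivOp
    exact comm_aux0 (pderiv_commute 0 1) (pderiv_commute 0 2) a b c
  rw [h]; rfl

lemma peel1 (a b c : ℕ) (f : MvPolynomial (Fin 3) ℂ) :
    derivOp a (b+1) c f = derivOp a b c (pderiv 1 f) := by
  have h : derivOp a (b+1) c = (derivOp a b c).comp (pderiv (1:Fin 3)).toLinearMap := by
    show (_ : Module.End ℂ _) = _ * _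
    unfold derivOp
    exact comm_aux1 (pderiv_commute 1 2) a b c
  rw [h]; rfl

lemma peel2 (a b c : ℕ) (f : MvPolynomial (Fin 3) ℂ) :
    derivOp a b (c+1) f = derivOp a b c (pderiv 2 f) := by
  have h : derivOp a b (c+1) = (derivOp a b c).comp (pderiv (2:Fin 3)).toLinearMap := by
    show (_ : Module.End ℂ _) = _ * _
    unfold derivOp
    rw [pow_succ, ← mul_assoc]
  rw [h]; rfl

lemma derivOp_zero (f : MvPolynomial (Fin 3) ℂ) : derivOp 0 0 0 f = f := by
  unfold derivOp
  simp

lemma mem_multPoint_iff {m : ℕ} {p : Fin 3 → ℂ} {f : MvPolynomial (Fin 3) ℂ} :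
    f ∈ multPoint m p ↔ ∀ a b c : ℕ, a + b + c < m → aeval p (derivOp a b c f) = 0 := by
  simp [multPoint, Submodule.mem_iInf]

lemma multPoint_zero (p : Fin 3 → ℂ) : multPoint 0 p = ⊤ := by
  ext f
  simp [mem_multPoint_iff]

lemma multPoint_anti {m m' : ℕ} (h : m ≤ m') (p : Fin 3 → ℂ) :
    multPoint m' p ≤ multPoint m p := by
  intro f hf
  rw [mem_multPoint_iff] at hf ⊢
  exact fun a b c habc => hf a b c (habc.trans_le h)

lemma mem_multPoint_succ_iff {m : ℕ} {p : Fin 3 → ℂ} {f : MvPolynomial (Fin 3) ℂ} :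
    f ∈ multPoint (m+1) p ↔ aeval p f = 0 ∧ ∀ i : Fin 3, pderiv i f ∈ multPoint m p := by
  constructor
  · intro hf
    rw [mem_multPoint_iff] at hf
    refine ⟨by simpa [derivOp_zero] using hf 0 0 0 (by omega), fun i => ?_⟩
    rw [mem_multPoint_iff]
    intro a b c habc
    fin_cases i
    · show aeval p (derivOp a b c (pderiv 0 f)) = 0
      rw [← peel0]; exact hf (a+1) b c (by omega)
    · show aeval p (derivOp a b c (pderiv 1 f)) = 0
      rw [← peel1]; exact hf a (b+1) c (by omega)
    · show aeval p (derivOp a b c (pderiv 2 f)) = 0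
      rw [← peel2]; exact hf a b (c+1) (by omega)
  · rintro ⟨h0, hd⟩
    rw [mem_multPoint_iff]
    intro a b c habc
    match a, b, c with
    | 0, 0, 0 => rwa [derivOp_zero]
    | a, b, c+1 =>
      rw [peel2]
      exact mem_multPoint_iff.mp (hd 2) a b c (by omega)
    | a, b+1, 0 =>
      rw [peel1]
      exact mem_multPoint_iff.mp (hd 1) a b 0 (by omega)
    | a+1, 0, 0 =>
      rw [peel0]
      exact mem_multPoint_iff.mp (hd 0) a 0 0 (by omega)

lemma pderiv_mem_multPoint_pred {m : ℕ} {p : Fin 3 → ℂ} {f : MvPolynomial (Fin 3) ℂ}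
    (hf : f ∈ multPoint m p) (i : Fin 3) : pderiv i f ∈ multPoint (m-1) p := by
  cases m with
  | zero => simp [multPoint_zero]
  | succ m => exact (mem_multPoint_succ_iff.mp hf).2 i

lemma aeval_eq_zero_of_mem_multPoint {m : ℕ} {p : Fin 3 → ℂ} {f : MvPolynomial (Fin 3) ℂ}
    (hf : f ∈ multPoint m p) (hm : 0 < m) : aeval p f = 0 := by
  rw [mem_multPoint_iff] at hf
  simpa [derivOp_zero] using hf 0 0 0 (by omega)

lemma mul_mem_multPoint {p : Fin 3 → ℂ} :
    ∀ (n m k : ℕ) (F G : MvPolynomial (Fin 3) ℂ), m + k = n →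
      F ∈ multPoint m p → G ∈ multPoint k p → F * G ∈ multPoint n p := by
  intro n
  induction n with
  | zero => intro m k F G _ _ _; simp [multPoint_zero]
  | succ n ih =>
    intro m k F G hmk hF hG
    rw [mem_multPoint_succ_iff]
    constructor
    · rw [map_mul]
      rcases Nat.eq_zero_or_pos m |>.symm with hm | rfl
      · rw [aeval_eq_zero_of_mem_multPoint hF hm, zero_mul]
      · rw [aeval_eq_zero_of_mem_multPoint hG (by omega), mul_zero]
    · intro i
      rw [pderiv_mul]
      apply Submodule.add_mem
      · exact ih (m-1) (n-(m-1)) _ G (by omega)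
          (pderiv_mem_multPoint_pred hF i) (multPoint_anti (by omega) p hG)
      · exact ih (n-(k-1)) (k-1) F _ (by omega)
          (multPoint_anti (by omega) p hF) (pderiv_mem_multPoint_pred hG i)

lemma findim_rtd : FiniteDimensional ℂ (restrictTotalDegree (Fin 3) ℂ 5) := by
  have hfin : {n : Fin 3 →₀ ℕ | (n.sum fun _ e => e) ≤ 5}.Finite := by
    apply (Set.finite_Iic (Finsupp.equivFunOnFinite.symm (fun _ => 5) : Fin 3 →₀ ℕ)).subset
    intro n hn
    rw [Set.mem_Iic, Finsupp.le_iff]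
    intro i hi
    calc n i ≤ ∑ j ∈ n.support, n j := Finset.single_le_sum (fun _ _ => Nat.zero_le _) hi
      _ ≤ 5 := hn
      _ = _ := by simp
  haveI := hfin.to_subtype
  exact Module.Finite.of_basis (basisRestrictSupport ℂ _)

lemma mem_multPoint_one {p : Fin 3 → ℂ} {f : MvPolynomial (Fin 3) ℂ} (h : aeval p f = 0) :
    f ∈ multPoint 1 p := by
  rw [mem_multPoint_iff]
  intro a b c habc
  obtain ⟨rfl, rfl, rfl⟩ : a = 0 ∧ b = 0 ∧ c = 0 := by omega
  rwa [derivOp_zero]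


set_option maxHeartbeats 1000000 in
set_option synthInstance.maxHeartbeats 400000 in
/-- The space of homogeneous quintics with multiplicity at least 4 at two (nonzero)
points has dimension at least 4, so the system `L(5, 0, 2, 4)` is special. -/
theorem L_5_0_2_4_special (p : Fin 2 → Fin 3 → ℂ) (hp : ∀ i, p i ≠ 0) :
    4 ≤ Module.finrank ℂ
      ↥(homogeneousSubmodule (Fin 3) ℂ 5 ⊓ ⨅ i, multPoint 4 (p i)) := by
  classical
  set T := homogeneousSubmodule (Fin 3) ℂ 5 ⊓ ⨅ i, multPoint 4 (p i) with hT
  haveI := findim_rtd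
  have hTle : T ≤ restrictTotalDegree (Fin 3) ℂ 5 := by
    refine inf_le_left.trans ?_
    intro f hf
    rw [mem_restrictTotalDegree]
    exact ((mem_homogeneousSubmodule _ _).mp hf).totalDegree_le
  haveI : FiniteDimensional ℂ T := Submodule.finiteDimensional_of_le hTle
  -- the linear form L
  obtain ⟨L, hL1, hLz, hLne⟩ : ∃ L : MvPolynomial (Fin 3) ℂ,
      L.IsHomogeneous 1 ∧ (∀ i, aeval (p i) L = 0) ∧ L ≠ 0 := by
    set W := Submodule.span ℂ (Set.range (X : Fin 3 → MvPolynomial (Fin 3) ℂ)) with hW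
    haveI : FiniteDimensional ℂ W := FiniteDimensional.span_of_finite ℂ (Set.finite_range _)
    have hWrank : Module.finrank ℂ W = 3 := by
      rw [finrank_span_eq_card (linearIndependent_X (Fin 3) ℂ)]
      simp
    let gL : W →ₗ[ℂ] (Fin 2 → ℂ) :=
      LinearMap.pi (fun i => (aeval (p i)).toLinearMap.comp W.subtype)
    have hker : 1 ≤ Module.finrank ℂ (LinearMap.ker gL) := by
      have h1 := LinearMap.finrank_range_add_finrank_ker gL
      have h2 : Module.finrank ℂ (LinearMap.range gL) ≤ 2 := by
        have := Submodule.finrank_le (LinearMap.range gL)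
        rwa [Module.finrank_fin_fun] at this
      omega
    haveI : Nontrivial (LinearMap.ker gL) := by
      exact (Module.finrank_pos_iff (R := ℂ)).mp (by omega)
    obtain ⟨x, hx⟩ := exists_ne (0 : LinearMap.ker gL)
    refine ⟨(x : W), ?_, ?_, ?_⟩
    · have hWle : W ≤ homogeneousSubmodule (Fin 3) ℂ 1 := by
        rw [hW, Submodule.span_le]
        rintro _ ⟨i, rfl⟩
        rw [SetLike.mem_coe, mem_homogeneousSubmodule]
        exact isHomogeneous_X ℂ i
      exact (mem_homogeneousSubmodule _ _).mp (hWle (x : W).2)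
    · intro i
      have := x.2
      rw [LinearMap.mem_ker] at this
      have := congrFun this i
      simpa [gL] using this
    · intro h0
      exact hx (Subtype.ext (Subtype.ext h0))
  -- the quadrics
  let v : Fin 6 → (Fin 3 → ℕ) := ![![2,0,0],![0,2,0],![0,0,2],![1,1,0],![1,0,1],![0,1,1]]
  have hvinj : Function.Injective v := by decide
  let d : Fin 6 → (Fin 3 →₀ ℕ) := fun j => Finsupp.equivFunOnFinite.symm (v j)
  have hdinj : Function.Injective d := Finsupp.equivFunOnFinite.symm.injective.comp hvinj
  let q : Fin 6 → MvPolynomial (Fin 3) ℂ := fun j => monomial (d j) 1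
  have hqli : LinearIndependent ℂ q :=
    (basisMonomials (Fin 3) ℂ).linearIndependent.comp d hdinj
  set M := Submodule.span ℂ (Set.range q) with hMdef
  haveI : FiniteDimensional ℂ M := FiniteDimensional.span_of_finite ℂ (Set.finite_range _)
  have hM : Module.finrank ℂ M = 6 := by
    rw [finrank_span_eq_card hqli]
    simp
  have hMhom : M ≤ homogeneousSubmodule (Fin 3) ℂ 2 := by
    rw [hMdef, Submodule.span_le]
    rintro _ ⟨j, rfl⟩
    rw [SetLike.mem_coe, mem_homogeneousSubmodule]
    apply isHomogeneous_monomial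
    have : (d j).degree = ∑ i, v j i := by
      rw [Finsupp.degree]
      apply Finset.sum_subset (Finset.subset_univ _)
      intro i _ hi
      simpa [d, Finsupp.equivFunOnFinite] using
        (Finsupp.notMem_support_iff.mp hi)
    have hsum : ∀ j, ∑ i, v j i = 2 := by decide
    rw [this, hsum]
  let g : M →ₗ[ℂ] (Fin 2 → ℂ) :=
    LinearMap.pi (fun i => (aeval (p i)).toLinearMap.comp M.subtype)
  have hkerg : 4 ≤ Module.finrank ℂ (LinearMap.ker g) := by
    have h1 := LinearMap.finrank_range_add_finrank_ker g
    have h2 : Module.finrank ℂ (LinearMap.range g) ≤ 2 := by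
      have := Submodule.finrank_le (LinearMap.range g)
      rwa [Module.finrank_fin_fun] at this
    omega
  -- multiplicity facts
  have hL3 : ∀ i, (L^3 : MvPolynomial (Fin 3) ℂ) ∈ multPoint 3 (p i) := by
    intro i
    have h1 : L ∈ multPoint 1 (p i) := mem_multPoint_one (hLz i)
    have h2 : L * L ∈ multPoint 2 (p i) := mul_mem_multPoint 2 1 1 L L rfl h1 h1
    have h3 : L * L * L ∈ multPoint 3 (p i) := mul_mem_multPoint 3 2 1 _ L rfl h2 h1
    rwa [pow_succ, pow_two]
  -- the injection
  let ψ : LinearMap.ker g →ₗ[ℂ] MvPolynomial (Fin 3) ℂ :=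
    (LinearMap.mulLeft ℂ (L^3)).comp (M.subtype.comp (LinearMap.ker g).subtype)
  have hψmem : ∀ x : LinearMap.ker g, ψ x ∈ T := by
    intro x
    have hQhom : ((x : M) : MvPolynomial (Fin 3) ℂ).IsHomogeneous 2 :=
      (mem_homogeneousSubmodule _ _).mp (hMhom (x : M).2)
    have hQz : ∀ i, aeval (p i) ((x : M) : MvPolynomial (Fin 3) ℂ) = 0 := by
      intro i
      have := x.2
      rw [LinearMap.mem_ker] at this
      have := congrFun this i
      simpa [g] using this
    rw [hT, Submodule.mem_inf]
    constructor
    · rw [mem_homogeneousSubmodule]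
      have := ((hL1.pow 3).mul hQhom)
      simpa [ψ] using this
    · rw [Submodule.mem_iInf]
      intro i
      exact mul_mem_multPoint 4 3 1 _ _ rfl (hL3 i) (mem_multPoint_one (hQz i))
  let φ : LinearMap.ker g →ₗ[ℂ] T := LinearMap.codRestrict T ψ hψmem
  have hφinj : Function.Injective φ := by
    intro x y hxy
    have h : ψ x = ψ y := congrArg Subtype.val hxy
    have hL3ne : (L^3 : MvPolynomial (Fin 3) ℂ) ≠ 0 := pow_ne_zero 3 hLne
    simp only [ψ, LinearMap.comp_apply, LinearMap.mulLeft_apply, Submodule.subtype_apply] at h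
    exact Subtype.ext (Subtype.ext (mul_left_cancel₀ hL3ne h))
  calc (4 : ℕ) ≤ Module.finrank ℂ (LinearMap.ker g) := hkerg
    _ ≤ Module.finrank ℂ T := LinearMap.finrank_le_finrank_of_injective hφinj
end
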